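/- Let θ be a positive Borel measure on [-1,1] with infinitely many points of increase, let a_1,…,a_m ∈ [-1,1] with θ({a_k}) = 0, and let M_{k,i} ≥ 0 for i = 0,…,N_k−1 and M_{k,N_k} > 0 (k = 1,…,m). Let (q̂_n)_{n≥0} be the sequence of polynomials, deg q̂_n = n, with positive leading coefficients, orthonormal with respect to the Sobolev inner product ⟨f,g⟩ = ∫_{-1}^{1} f g dθ + Σ_{k=1}^{m} Σ_{i=0}^{N_k} M_{k,i} f^{(i)}(a_k) g^{(i)}(a_k). For each k set N*_k = N_k + 1 if N_k is odd and N*_k = N_k + 2 if N_k is even, let N = Σ_{k=1}^{m} N*_k, w_N(x) = Π_{k=1}^{m}(x − a_k)^{N*_k}, and π_{N+1}(x) = ∫_{-1}^{x} w_N(t) dt. Then there exist real coefficients d_{n,j} (with d_{n,s} = 0 for n = 0,1,…,s−1, and with the convention q̂_{-j} = 0 for j ≥ 1) such that for all n ∈ ℤ_+: π_{N+1}(x) q̂_n(x) = Σ_{j=0}^{N+1} d_{n+j,j} q̂_{n+j}(x) + Σ_{j=1}^{N+1} d_{n,j} q̂_{n−j}(x). -/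

import Mathlib

/-!
Since `π_{N+1}' = w_N` vanishes to order `N*_k ≥ N_k` at every `a_k`, Leibniz' rule gives
`(π f)^{(i)}(a_k) = π(a_k) f^{(i)}(a_k)` for `i ≤ N_k`, so multiplication by `π_{N+1}` is
self-adjoint for the Sobolev form. Hence the Fourier coefficient `⟨π q̂_n, q̂_p⟩`, which vanishes
for `p > n + N + 1` because `deg (π q̂_n) = n + N + 1`, also vanishes for `p < n - N - 1`, and the
expansion of `π q̂_n` in the orthonormal basis `(q̂_p)` has only the `2N + 3` terms
`|p - n| ≤ N + 1`.
-/

open MeasureTheory Polynomial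

noncomputable def NStar (n : ℕ) : ℕ := if Odd n then n + 1 else n + 2

noncomputable def sobolevInner {m : ℕ} (θ : Measure ℝ) (a : Fin m → ℝ)
    (Nk : Fin m → ℕ) (M : Fin m → ℕ → ℝ) (f g : ℝ → ℝ) : ℝ :=
  (∫ x in Set.Icc (-1:ℝ) 1, f x * g x ∂θ) +
    ∑ k : Fin m, ∑ i ∈ Finset.range (Nk k + 1),
      M k i * iteratedDeriv i f (a k) * iteratedDeriv i g (a k)

namespace Polynomial

theorem eval_iterate_derivative_mul_of_pow_dvd_derivative {R : Type*} [CommRing R]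
    {p : R[X]} {b : R} {i : ℕ} (h : (X - C b) ^ i ∣ derivative p) (u : R[X]) :
    (derivative^[i] (p * u)).eval b = p.eval b * (derivative^[i] u).eval b := by
  rw [iterate_derivative_mul, eval_finsetSum, Finset.sum_eq_single_of_mem i
    (Finset.self_mem_range_succ i)]
  · simp
  · intro k hk hki
    have hk : k < i := lt_of_le_of_ne (Finset.mem_range_succ_iff.mp hk) hki
    obtain ⟨w, hw⟩ := pow_sub_dvd_iterate_derivative_of_pow_dvd (i - k - 1) h
    rw [show i - k = i - k - 1 + 1 by omega, Function.iterate_succ_apply, hw]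
    simp [sub_self, zero_pow (show i - (i - k - 1) ≠ 0 by omega)]

theorem exists_derivative_eq {K : Type*} [Field K] [CharZero K] (W : K[X]) :
    ∃ P, derivative P = W := by
  induction W using Polynomial.induction_on' with
  | add W W' hW hW' =>
    obtain ⟨P, rfl⟩ := hW
    obtain ⟨P', rfl⟩ := hW'
    exact ⟨P + P', derivative_add⟩
  | monomial n c =>
    refine ⟨monomial (n + 1) (c / (n + 1)), ?_⟩
    rw [derivative_monomial]
    congr 1
    push_cast
    field_simp

theorem iteratedDeriv_eval (p : ℝ[X]) (i : ℕ) :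
    iteratedDeriv i (fun x => p.eval x) = fun x => (derivative^[i] p).eval x := by
  induction i generalizing p with
  | zero => simp
  | succ i ih =>
    rw [iteratedDeriv_succ', Function.iterate_succ_apply, ← ih]
    congr 1
    funext x
    exact p.deriv

theorem exists_intervalIntegral_eval_eq (W : ℝ[X]) (u : ℝ) :
    ∃ π : ℝ[X], derivative π = W ∧ π.natDegree ≤ W.natDegree + 1 ∧
      ∀ x, ∫ t in u..x, W.eval t = π.eval x := by
  obtain ⟨P, rfl⟩ := exists_derivative_eq W
  refine ⟨P - C (P.eval u), by simp, by rw [natDegree_sub_C, natDegree_derivative]; omega,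
    fun x => ?_⟩
  rw [intervalIntegral.integral_eq_sub_of_hasDerivAt (fun t _ => P.hasDerivAt t)
    (P.derivative.continuous.intervalIntegrable _ _)]
  simp

end Polynomial

section Sobolev

variable {m : ℕ} (θ : Measure ℝ) (a : Fin m → ℝ) (Nk : Fin m → ℕ) (M : Fin m → ℕ → ℝ)

theorem sobolevInner_comm (f g : ℝ → ℝ) :
    sobolevInner θ a Nk M f g = sobolevInner θ a Nk M g f := by
  simp only [sobolevInner, mul_comm (f _), mul_right_comm (M _ _)]

theorem sobolevInner_eval (p r : ℝ[X]) :
    sobolevInner θ a Nk M (fun x => p.eval x) (fun x => r.eval x) =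
      (∫ x in Set.Icc (-1:ℝ) 1, p.eval x * r.eval x ∂θ) +
        ∑ k : Fin m, ∑ i ∈ Finset.range (Nk k + 1),
          M k i * (derivative^[i] p).eval (a k) * (derivative^[i] r).eval (a k) := by
  simp only [sobolevInner, iteratedDeriv_eval]

theorem sobolevInner_eval_add_left [IsFiniteMeasureOnCompacts θ] (p p' r : ℝ[X]) :
    sobolevInner θ a Nk M (fun x => (p + p').eval x) (fun x => r.eval x) =
      sobolevInner θ a Nk M (fun x => p.eval x) (fun x => r.eval x) +
        sobolevInner θ a Nk M (fun x => p'.eval x) (fun x => r.eval x) := by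
  have hint (u : ℝ[X]) : IntegrableOn (fun x => u.eval x * r.eval x) (Set.Icc (-1) 1) θ :=
    (u * r).continuous.continuousOn.integrableOn_compact isCompact_Icc |>.congr_fun
      (fun x _ => eval_mul) measurableSet_Icc
  rw [sobolevInner_eval, sobolevInner_eval, sobolevInner_eval]
  simp only [eval_add, mul_add, add_mul, integral_add (hint p) (hint p'), iterate_map_add,
    Finset.sum_add_distrib]
  ring

theorem sobolevInner_eval_smul_left (c : ℝ) (p r : ℝ[X]) :
    sobolevInner θ a Nk M (fun x => (c • p).eval x) (fun x => r.eval x) =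
      c * sobolevInner θ a Nk M (fun x => p.eval x) (fun x => r.eval x) := by
  rw [sobolevInner_eval, sobolevInner_eval]
  simp only [eval_smul, iterate_derivative_smul, smul_eq_mul, mul_add, Finset.mul_sum,
    ← integral_const_mul, mul_assoc, mul_left_comm c]

noncomputable def sobolevForm [IsFiniteMeasureOnCompacts θ] : LinearMap.BilinForm ℝ ℝ[X] :=
  LinearMap.mk₂ ℝ (fun p r => sobolevInner θ a Nk M (fun x => p.eval x) (fun x => r.eval x))
    (sobolevInner_eval_add_left θ a Nk M)
    (sobolevInner_eval_smul_left θ a Nk M)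
    (fun p r r' => by
      simp only [sobolevInner_comm θ a Nk M (fun x => p.eval x)]
      exact sobolevInner_eval_add_left θ a Nk M r r' p)
    (fun c p r => by
      simp only [sobolevInner_comm θ a Nk M (fun x => p.eval x)]
      exact sobolevInner_eval_smul_left θ a Nk M c r p)

variable [IsFiniteMeasureOnCompacts θ]

theorem sobolevForm_apply (p r : ℝ[X]) :
    sobolevForm θ a Nk M p r = sobolevInner θ a Nk M (fun x => p.eval x) (fun x => r.eval x) :=
  rfl

theorem sobolevForm_isSymm : (sobolevForm θ a Nk M).IsSymm :=
  ⟨fun _ _ => sobolevInner_comm θ a Nk M _ _⟩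

theorem sobolevForm_isSelfAdjoint_mul {π : ℝ[X]} (hπ : ∀ k, (X - C (a k)) ^ Nk k ∣ derivative π) :
    (sobolevForm θ a Nk M).IsSelfAdjoint (π * ·) := by
  intro u v
  rw [sobolevForm_apply, sobolevForm_apply, sobolevInner_eval, sobolevInner_eval]
  congr 1
  · simp only [eval_mul, mul_assoc, mul_left_comm]
  · refine Finset.sum_congr rfl fun k _ => Finset.sum_congr rfl fun i hi => ?_
    have hdvd := (pow_dvd_pow _ (Finset.mem_range_succ_iff.mp hi)).trans (hπ k)
    simp only [eval_iterate_derivative_mul_of_pow_dvd_derivative hdvd]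
    ring

end Sobolev

theorem Finset.sum_range_eq_sum_Icc_reflect {M : Type*} [AddCommMonoid M] (f : ℕ → M)
    {n b : ℕ} (hf : ∀ p, p + b < n → f p = 0) :
    ∑ p ∈ range n, f p = ∑ j ∈ Icc 1 b, if j ≤ n then f (n - j) else 0 := by
  refine Finset.sum_bij_ne_zero (fun p _ _ => n - p) ?_ ?_ ?_ ?_
  · intro p hp hfp
    have := mt (hf p) hfp
    simp only [mem_range, mem_Icc] at hp ⊢
    omega
  · intro p hp _ p' hp' _ h
    simp only [mem_range] at hp hp'
    omega
  · intro j hj hg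
    simp only [mem_Icc] at hj
    have hjn : j ≤ n := by by_contra h; exact hg (if_neg h)
    refine ⟨n - j, by simp only [mem_range]; omega, ?_, by omega⟩
    rwa [if_pos hjn] at hg
  · intro p hp _
    simp only [mem_range] at hp
    rw [if_pos (by omega), Nat.sub_sub_self hp.le]

namespace Polynomial.Sequence

variable {K : Type*} [Field K] (B : LinearMap.BilinForm K K[X]) {S : Sequence K}

theorem mem_span_image_Iio_of_natDegree_lt (S : Sequence K) {p : K[X]} {i : ℕ}
    (hp : p.natDegree < i) : p ∈ Submodule.span K (S '' Set.Iio i) := by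
  rw [S.span_degreeLT fun j _ => (leadingCoeff_ne_zero.mpr (S.ne_zero j)).isUnit, mem_degreeLT]
  exact degree_le_natDegree.trans_lt (WithBot.coe_lt_coe.mpr hp)

theorem apply_eq_zero_of_natDegree_lt (hS : ∀ i j, B (S i) (S j) = if i = j then 1 else 0)
    {p : K[X]} {i : ℕ} (hp : p.natDegree < i) : B p (S i) = 0 := by
  have hker : Submodule.span K (S '' Set.Iio i) ≤ LinearMap.ker (B.flip (S i)) := by
    rw [Submodule.span_le]
    rintro _ ⟨j, hj, rfl⟩
    simp [hS, (Set.mem_Iio.mp hj).ne]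
  exact hker (S.mem_span_image_Iio_of_natDegree_lt hp)

theorem eq_sum_apply_smul (hS : ∀ i j, B (S i) (S j) = if i = j then 1 else 0)
    {p : K[X]} {D : ℕ} (hp : p.natDegree ≤ D) :
    p = ∑ j ∈ Finset.range (D + 1), B p (S j) • S j := by
  have hspan : p ∈ Submodule.span K (S '' ↑(Finset.range (D + 1))) := by
    rw [Finset.coe_range]
    exact S.mem_span_image_Iio_of_natDegree_lt (Nat.lt_succ_of_le hp)
  obtain ⟨c, rfl⟩ := (Submodule.mem_span_image_finset_iff_exists_fun' K).mp hspan
  refine Finset.sum_congr rfl fun j hj => ?_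
  simp [map_sum, hS, hj]

theorem exists_recurrence (hS : ∀ i j, B (S i) (S j) = if i = j then 1 else 0)
    (hB : B.IsSymm) {π : K[X]} {b : ℕ} (hπ : π.natDegree ≤ b) (hπB : B.IsSelfAdjoint (π * ·)) :
    ∃ d : ℕ → ℕ → K, (∀ n s, n < s → d n s = 0) ∧ ∀ n,
      π * S n = ∑ j ∈ Finset.range (b + 1), d (n + j) j • S (n + j) +
        ∑ j ∈ Finset.Icc 1 b, d n j • (if j ≤ n then S (n - j) else 0) := by
  set c : ℕ → ℕ → K := fun n p => B (π * S n) (S p)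
  have hc_symm (n p : ℕ) : c n p = c p n := (hπB (S n) (S p)).trans (hB.eq _ _)
  have hc_band {n p : ℕ} (h : n + b < p) : c n p = 0 :=
    apply_eq_zero_of_natDegree_lt B hS <| natDegree_mul_le.trans_lt <| by
      rw [S.natDegree_eq]; omega
  refine ⟨fun n j => if j ≤ n then c n (n - j) else 0, fun n s h => if_neg (by omega), fun n => ?_⟩
  have hdeg : (π * S n).natDegree ≤ n + b := natDegree_mul_le.trans (by rw [S.natDegree_eq]; omega)
  have hlow (p : ℕ) (hp : p + b < n) : c n p • S p = 0 := by rw [hc_symm, hc_band hp, zero_smul]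
  rw [eq_sum_apply_smul B hS hdeg, add_assoc, Finset.sum_range_add,
    Finset.sum_range_eq_sum_Icc_reflect _ hlow, add_comm]
  congr 1
  · refine Finset.sum_congr rfl fun j _ => ?_
    change c n (n + j) • _ = (if j ≤ n + j then c (n + j) (n + j - j) else 0) • _
    rw [if_pos (Nat.le_add_left j n), Nat.add_sub_cancel, ← hc_symm]
  · refine Finset.sum_congr rfl fun j _ => ?_
    by_cases hjn : j ≤ n <;> simp [hjn, c]

end Polynomial.Sequence

theorem le_NStar (n : ℕ) : n ≤ NStar n := by
  unfold NStar
  split_ifs <;> omega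

theorem sobolev_recurrence_exists_general
    {m : ℕ} (θ : Measure ℝ) [IsFiniteMeasure θ]
    (a : Fin m → ℝ) (Nk : Fin m → ℕ) (M : Fin m → ℕ → ℝ)
    (q : ℕ → Polynomial ℝ)
    (hdeg : ∀ n, (q n).natDegree = n)
    (hlead : ∀ n, 0 < (q n).leadingCoeff)
    (horth : ∀ n n', sobolevInner θ a Nk M (fun x => (q n).eval x) (fun x => (q n').eval x)
      = if n = n' then 1 else 0) :
    ∃ d : ℕ → ℕ → ℝ, (∀ n s, n < s → d n s = 0) ∧
      ∀ (n : ℕ) (x : ℝ),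
        (∫ t in (-1:ℝ)..x, ∏ k : Fin m, (t - a k) ^ NStar (Nk k)) * (q n).eval x =
          (∑ j ∈ Finset.range ((∑ k : Fin m, NStar (Nk k)) + 2),
            d (n + j) j * (q (n + j)).eval x) +
          ∑ j ∈ Finset.Icc 1 ((∑ k : Fin m, NStar (Nk k)) + 1),
            d n j * (if j ≤ n then (q (n - j)).eval x else 0) := by
  set w : ℝ[X] := ∏ k : Fin m, (X - C (a k)) ^ NStar (Nk k)
  obtain ⟨π, hπ_deriv, hπ_deg, hπ_integral⟩ := exists_intervalIntegral_eval_eq w (-1)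
  have hπ_natDegree : π.natDegree ≤ (∑ k : Fin m, NStar (Nk k)) + 1 :=
    hπ_deg.trans <| Nat.succ_le_succ <| (natDegree_prod_le _ _).trans (by simp [natDegree_pow])
  have hπ_dvd (k : Fin m) : (X - C (a k)) ^ Nk k ∣ derivative π :=
    hπ_deriv ▸ (pow_dvd_pow _ (le_NStar _)).trans (Finset.dvd_prod_of_mem _ (Finset.mem_univ k))
  let S : Sequence ℝ := ⟨q, fun n => by
    rw [degree_eq_natDegree (leadingCoeff_ne_zero.mp (hlead n).ne'), hdeg]⟩
  obtain ⟨d, hd_zero, hd⟩ := S.exists_recurrence (sobolevForm θ a Nk M) horth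
    (sobolevForm_isSymm θ a Nk M) hπ_natDegree (sobolevForm_isSelfAdjoint_mul θ a Nk M hπ_dvd)
  refine ⟨d, hd_zero, fun n x => ?_⟩
  have hπ_eval : ∫ t in (-1:ℝ)..x, ∏ k : Fin m, (t - a k) ^ NStar (Nk k) = π.eval x := by
    simpa [w, eval_prod] using hπ_integral x
  rw [hπ_eval, ← eval_mul, show π * q n = π * S n from rfl, hd n]
  simp only [apply_ite, smul_zero, eval_add, eval_finsetSum, eval_smul, smul_eq_mul, eval_zero,
    mul_zero]
  -- what is left differs only by `↑S i = q i` and `N + 1 + 1 = N + 2`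
  rfl

/-- **(N+2)-term recurrence for continuous-discrete Sobolev orthonormal polynomials.**
Let `θ` be a positive Borel measure on `[-1,1]` with infinitely many points of increase,
mass points `a₁,…,a_m ∈ [-1,1]` with `θ({a_k}) = 0`, weights `M_{k,i} ≥ 0` for `i < N_k`,
`M_{k,N_k} > 0`, and let `q̂_n` be the Sobolev orthonormal polynomials (degree `n`, positive
leading coefficient). With `N*_k = N_k + 1` (`N_k` odd) or `N_k + 2` (`N_k` even),
`N = Σ N*_k`, `w_N(x) = Π (x - a_k)^{N*_k}` and `π_{N+1}(x) = ∫_{-1}^x w_N(t) dt`, there exist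
coefficients `d_{n,j}` (with `d_{n,s} = 0` for `n < s`, and `q̂_{-j} = 0`) such that
`π_{N+1}(x) q̂_n(x) = Σ_{j=0}^{N+1} d_{n+j,j} q̂_{n+j}(x) + Σ_{j=1}^{N+1} d_{n,j} q̂_{n-j}(x)`. -/
theorem sobolev_recurrence_exists
    {m : ℕ} (θ : Measure ℝ) [IsFiniteMeasure θ]
    (a : Fin m → ℝ) (Nk : Fin m → ℕ) (M : Fin m → ℕ → ℝ)
    (ha : ∀ k, a k ∈ Set.Icc (-1:ℝ) 1)
    (hθsupp : θ (Set.Icc (-1:ℝ) 1)ᶜ = 0)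
    (hθinc : {x : ℝ | ∀ ε > 0, 0 < θ (Set.Ioo (x - ε) (x + ε))}.Infinite)
    (hθa : ∀ k, θ {a k} = 0)
    (hM0 : ∀ k, ∀ i < Nk k, 0 ≤ M k i)
    (hMN : ∀ k, 0 < M k (Nk k))
    (q : ℕ → Polynomial ℝ)
    (hdeg : ∀ n, (q n).natDegree = n)
    (hlead : ∀ n, 0 < (q n).leadingCoeff)
    (horth : ∀ n n', sobolevInner θ a Nk M (fun x => (q n).eval x) (fun x => (q n').eval x)
      = if n = n' then 1 else 0) :
    ∃ d : ℕ → ℕ → ℝ, (∀ n s, n < s → d n s = 0) ∧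
      ∀ (n : ℕ) (x : ℝ),
        (∫ t in (-1:ℝ)..x, ∏ k : Fin m, (t - a k) ^ NStar (Nk k)) * (q n).eval x =
          (∑ j ∈ Finset.range ((∑ k : Fin m, NStar (Nk k)) + 2),
            d (n + j) j * (q (n + j)).eval x) +
          ∑ j ∈ Finset.Icc 1 ((∑ k : Fin m, NStar (Nk k)) + 1),
            d n j * (if j ≤ n then (q (n - j)).eval x else 0) :=
  sobolev_recurrence_exists_general θ a Nk M q hdeg hlead horth
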